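/- arXiv:1207.1238 — 3 statements merged into one kernel-verified Lean document; each statement's English description precedes it below -/
import Mathlib

section
/- Let d_1, …, d_n be positive integers (n ≥ 2), let D = ∑_{i=1}^n d_i, and let s be an integer with 0 < s < D. Set p_i = d_i/D, q = s/D, P = (p_1, …, p_n), and Q = (q, 1−q). Then there exists a subset J ⊆ {1, …, n} with ∑_{j∈J} d_j = s if and only if there exists a matrix S ∈ C(P,Q) with H(S) = H(P). -/
open Finset Real

/-- A probability vector: nonnegative entries summing to 1. -/
def IsProbVec {n : ℕ} (P : Fin n → ℝ) : Prop :=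
  (∀ i, 0 ≤ P i) ∧ ∑ i, P i = 1

/-- Membership in the transportation polytope `C(P,Q)`: nonnegative entries,
row sums `P`, column sums `Q`. -/
def MemCoupling {n m : ℕ} (P : Fin n → ℝ) (Q : Fin m → ℝ)
    (S : Fin n → Fin m → ℝ) : Prop :=
  (∀ i j, 0 ≤ S i j) ∧ (∀ i, ∑ j, S i j = P i) ∧ (∀ j, ∑ i, S i j = Q j)

/-- Shannon entropy of a vector (natural log, `0 log 0 = 0` since `Real.log 0 = 0`). -/
noncomputable def vecEnt {n : ℕ} (P : Fin n → ℝ) : ℝ :=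
  -∑ i, P i * Real.log (P i)

/-- Joint (Shannon) entropy of a matrix. -/
noncomputable def matEnt {n m : ℕ} (S : Fin n → Fin m → ℝ) : ℝ :=
  -∑ i, ∑ j, S i j * Real.log (S i j)

/-!
A row `(s_{i1}, …, s_{im})` of a coupling splits the mass `p_i`, so every entry satisfies
`s_{ij} ≤ p_i` and `H(S) - H(P) = ∑ s_{ij} (log p_i - log s_{ij})` is a sum of nonnegative terms.
Hence `H(S) = H(P)` exactly when every entry is `0` or the whole row mass `p_i`, i.e. when `S`
sends each row entirely to one column. With two columns such a coupling is the same thing as a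
set `J` of rows whose mass `∑_{j ∈ J} d_j / D` equals the first column sum `s / D`.
-/

lemma mul_log_sub_log_nonneg {x y : ℝ} (hx : 0 ≤ x) (hxy : x ≤ y) :
    0 ≤ x * (log y - log x) := by
  rcases hx.eq_or_lt with rfl | hx
  · simp
  · exact mul_nonneg hx.le (sub_nonneg.2 (log_le_log hx hxy))

lemma mul_log_sub_log_eq_zero_iff {x y : ℝ} (hx : 0 ≤ x) (hxy : x ≤ y) :
    x * (log y - log x) = 0 ↔ x = 0 ∨ x = y := by
  rcases hx.eq_or_lt with rfl | hx
  · simp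
  · have hy : 0 < y := hx.trans_le hxy
    simp only [mul_eq_zero, hx.ne', false_or, sub_eq_zero]
    exact ⟨fun h => log_injOn_pos hx hy h.symm, fun h => h ▸ rfl⟩

section Entropy

variable {n m : ℕ} {P : Fin n → ℝ} {S : Fin n → Fin m → ℝ}

lemma matEnt_sub_vecEnt (hrow : ∀ i, ∑ j, S i j = P i) :
    matEnt S - vecEnt P = ∑ i, ∑ j, S i j * (log (P i) - log (S i j)) := by
  simp only [matEnt, vecEnt, mul_sub, sum_sub_distrib, ← sum_mul, hrow]
  ring

lemma le_of_nonneg_of_sum_eq (hnn : ∀ i j, 0 ≤ S i j) (hrow : ∀ i, ∑ j, S i j = P i)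
    (i : Fin n) (j : Fin m) : S i j ≤ P i :=
  hrow i ▸ single_le_sum (fun j _ => hnn i j) (mem_univ j)

theorem matEnt_eq_vecEnt_iff (hnn : ∀ i j, 0 ≤ S i j) (hrow : ∀ i, ∑ j, S i j = P i) :
    matEnt S = vecEnt P ↔ ∀ i j, S i j = 0 ∨ S i j = P i := by
  have hle := le_of_nonneg_of_sum_eq hnn hrow
  rw [← sub_eq_zero, matEnt_sub_vecEnt hrow,
    sum_eq_zero_iff_of_nonneg fun i _ => sum_nonneg fun j _ =>
      mul_log_sub_log_nonneg (hnn i j) (hle i j)]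
  simp only [mem_univ, forall_const]
  refine forall_congr' fun i => ?_
  rw [sum_eq_zero_iff_of_nonneg fun j _ => mul_log_sub_log_nonneg (hnn i j) (hle i j)]
  simp only [mem_univ, forall_const, mul_log_sub_log_eq_zero_iff (hnn i _) (hle i _)]

end Entropy

section TwoColumns

variable {n : ℕ}

def splitCoupling (P : Fin n → ℝ) (J : Finset (Fin n)) : Fin n → Fin 2 → ℝ :=
  fun i j => if (i ∈ J ↔ j = 0) then P i else 0

lemma splitCoupling_eq_zero_or_eq (P : Fin n → ℝ) (J : Finset (Fin n)) (i : Fin n) (j : Fin 2) :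
    splitCoupling P J i j = 0 ∨ splitCoupling P J i j = P i := by
  unfold splitCoupling
  split_ifs <;> simp

lemma memCoupling_splitCoupling {P : Fin n → ℝ} (hP : IsProbVec P) (J : Finset (Fin n)) :
    MemCoupling P ![∑ i ∈ J, P i, 1 - ∑ i ∈ J, P i] (splitCoupling P J) := by
  refine ⟨fun i j => ?_, fun i => ?_, fun j => ?_⟩
  · rcases splitCoupling_eq_zero_or_eq P J i j with h | h <;> simp [h, hP.1 i]
  · by_cases h : i ∈ J <;> simp [splitCoupling, Fin.sum_univ_two, h]
  · fin_cases j
    · simp [splitCoupling, sum_ite_mem]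
    · simp only [splitCoupling, Fin.reduceFinMk, one_ne_zero, iff_false, Fin.isValue,
        Matrix.cons_val_one, Matrix.cons_val_fin_one]
      rw [eq_sub_iff_add_eq, ← hP.2, ← sum_ite_mem_eq J, ← sum_add_distrib]
      exact sum_congr rfl fun i _ => by split_ifs <;> simp

lemma exists_finset_sum_eq_of_forall_eq_zero_or_eq {P v : Fin n → ℝ}
    (hv : ∀ i, v i = 0 ∨ v i = P i) : ∃ J : Finset (Fin n), ∑ i ∈ J, P i = ∑ i, v i := by
  refine ⟨univ.filter (v · ≠ 0), ?_⟩
  refine (sum_congr rfl fun i hi => ?_).trans (sum_filter_ne_zero univ)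
  exact ((hv i).resolve_left (mem_filter.1 hi).2).symm

end TwoColumns

lemma isProbVec_div_sum {n : ℕ} {d : Fin n → ℕ} (hD : ∑ i, d i ≠ 0) :
    IsProbVec fun i => (d i : ℝ) / ((∑ i, d i : ℕ) : ℝ) := by
  refine ⟨fun i => by positivity, ?_⟩
  rw [← sum_div, ← Nat.cast_sum, div_self (by exact_mod_cast hD)]

lemma sum_div_eq_div_iff {n : ℕ} {d : Fin n → ℕ} {D s : ℕ} (hD : D ≠ 0) (J : Finset (Fin n)) :
    ∑ i ∈ J, (d i : ℝ) / D = (s : ℝ) / D ↔ ∑ i ∈ J, d i = s := by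
  rw [← sum_div, div_left_inj' (by exact_mod_cast hD)]
  exact_mod_cast Iff.rfl

theorem subset_sum_iff_entropy_min_general (n : ℕ) (d : Fin n → ℕ)
    (s : ℕ) (hsD : s < ∑ i, d i) :
    (∃ J : Finset (Fin n), ∑ j ∈ J, d j = s) ↔
    (∃ S : Fin n → Fin 2 → ℝ,
      MemCoupling (fun i => (d i : ℝ) / ((∑ i, d i : ℕ) : ℝ))
        ![(s : ℝ) / ((∑ i, d i : ℕ) : ℝ), 1 - (s : ℝ) / ((∑ i, d i : ℕ) : ℝ)] S ∧
      matEnt S = vecEnt (fun i => (d i : ℝ) / ((∑ i, d i : ℕ) : ℝ))) := by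
  have hD : ∑ i, d i ≠ 0 := (Nat.zero_lt_of_lt hsD).ne'
  constructor
  · rintro ⟨J, hJ⟩
    have hS := memCoupling_splitCoupling (isProbVec_div_sum hD) J
    rw [(sum_div_eq_div_iff hD J).2 hJ] at hS
    exact ⟨_, hS, (matEnt_eq_vecEnt_iff hS.1 hS.2.1).2 (splitCoupling_eq_zero_or_eq _ J)⟩
  · rintro ⟨S, ⟨hnn, hrow, hcol⟩, hent⟩
    obtain ⟨J, hJ⟩ := exists_finset_sum_eq_of_forall_eq_zero_or_eq
      fun i => (matEnt_eq_vecEnt_iff hnn hrow).1 hent i 0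
    exact ⟨J, (sum_div_eq_div_iff hD J).1 (hJ.trans (hcol 0))⟩

/-- reduction of Subset Sum to Entropy Minimization over a
transportation polytope with marginals `P = (dᵢ/D)` and `Q = (s/D, 1 - s/D)`. -/
theorem subset_sum_iff_entropy_min (n : ℕ) (hn : 2 ≤ n) (d : Fin n → ℕ)
    (hd : ∀ i, 0 < d i) (s : ℕ) (hs0 : 0 < s) (hsD : s < ∑ i, d i) :
    (∃ J : Finset (Fin n), ∑ j ∈ J, d j = s) ↔
    (∃ S : Fin n → Fin 2 → ℝ,
      MemCoupling (fun i => (d i : ℝ) / ((∑ i, d i : ℕ) : ℝ))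
        ![(s : ℝ) / ((∑ i, d i : ℕ) : ℝ), 1 - (s : ℝ) / ((∑ i, d i : ℕ) : ℝ)] S ∧
      matEnt S = vecEnt (fun i => (d i : ℝ) / ((∑ i, d i : ℕ) : ℝ))) :=
  subset_sum_iff_entropy_min_general n d s hsD
end

section
/- Let P and Q be finitely supported probability distributions on ℕ. Then Δ̲(P,Q) = H(P) − H(Q) if and only if there exists S ∈ C(P,Q) such that for every i there is at most one j with S(i,j) ≠ 0 (i.e., a coupling in which the second coordinate is a deterministic function of the first). -/
open Real

/-- A finitely supported probability distribution on `ℕ`. -/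
def IsFinProb (P : ℕ → ℝ) : Prop :=
  (∀ i, 0 ≤ P i) ∧ (Function.support P).Finite ∧ ∑ᶠ i, P i = 1

/-- Membership in the set `C(P,Q)` of finitely supported couplings of `P` and `Q`. -/
def MemCouplingN (P Q : ℕ → ℝ) (S : ℕ × ℕ → ℝ) : Prop :=
  (∀ x, 0 ≤ S x) ∧ (Function.support S).Finite ∧
  (∀ i, ∑ᶠ j, S (i, j) = P i) ∧ (∀ j, ∑ᶠ i, S (i, j) = Q j)

/-- Shannon entropy of a distribution on `ℕ` (natural log, `0 log 0 = 0`
since `Real.log 0 = 0`). -/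
noncomputable def entN (P : ℕ → ℝ) : ℝ := -∑ᶠ i, P i * Real.log (P i)

/-- Joint entropy of a coupling. -/
noncomputable def entN2 (S : ℕ × ℕ → ℝ) : ℝ := -∑ᶠ x, S x * Real.log (S x)

/-- Mutual information of a coupling `S` of `P` and `Q` (terms with `S x = 0`
vanish). -/
noncomputable def mutInfoN (P Q : ℕ → ℝ) (S : ℕ × ℕ → ℝ) : ℝ :=
  ∑ᶠ x : ℕ × ℕ, S x * Real.log (S x / (P x.1 * Q x.2))

/-- Variation of information of a coupling. -/
noncomputable def vi (P Q : ℕ → ℝ) (S : ℕ × ℕ → ℝ) : ℝ :=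
  entN2 S - mutInfoN P Q S

/-- `Δ̲(P,Q)`: the infimum of the variation of information over all couplings. -/
noncomputable def viDist (P Q : ℕ → ℝ) : ℝ :=
  sInf {d : ℝ | ∃ S : ℕ × ℕ → ℝ, MemCouplingN P Q S ∧ d = vi P Q S}



/-!
Since `I(S) = H(P) + H(Q) - H(S)`, we have `Δ(S) = 2 H(S) - H(P) - H(Q)`, and
`H(S) - H(P) = ∑ S(i,j) log (P(i) / S(i,j)) ≥ 0` because `S(i,j) ≤ P(i)`; the sum vanishes exactly
when every nonzero `S(i,j)` equals `P(i)`, i.e. when each row has a single nonzero entry.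
So `Δ(S) ≥ H(P) - H(Q)` with equality exactly at deterministic couplings. For the forward direction
the infimum must be attained: the couplings form a closed subset of the product space `[0,1]^(ℕ × ℕ)`, hence a
compact set, and on it `H` is a finite sum of `-x log x` over `supp P × supp Q`, hence continuous.
-/

open Function

section

variable {P Q : ℕ → ℝ} {S : ℕ × ℕ → ℝ}

lemma IsFinProb.le_one (hP : IsFinProb P) (i : ℕ) : P i ≤ 1 :=
  hP.2.2 ▸ single_le_finsum i hP.2.1 hP.1

lemma IsFinProb.memCouplingN_mul (hP : IsFinProb P) (hQ : IsFinProb Q) :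
    MemCouplingN P Q fun x => P x.1 * Q x.2 := by
  refine ⟨fun x => mul_nonneg (hP.1 _) (hQ.1 _), ?_, fun i => ?_, fun j => ?_⟩
  · exact (hP.2.1.prod hQ.2.1).subset fun x hx => ⟨left_ne_zero_of_mul hx, right_ne_zero_of_mul hx⟩
  · simp only [← mul_finsum, hQ.2.2, mul_one]
  · simp only [← finsum_mul, hP.2.2, one_mul]

lemma mul_log_div_eq_zero_iff {a b : ℝ} (ha : 0 < a) (hb : 0 < b) :
    a * log (b / a) = 0 ↔ b = a := by
  refine ⟨fun h => ?_, fun h => by rw [h, div_self ha.ne', log_one, mul_zero]⟩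
  by_contra hne
  refine log_ne_zero_of_pos_of_ne_one (div_pos hb ha) ?_ ((mul_eq_zero.1 h).resolve_left ha.ne')
  rwa [ne_eq, div_eq_one_iff_eq ha.ne']

namespace MemCouplingN

lemma swap (hS : MemCouplingN P Q S) : MemCouplingN Q P (S ∘ Prod.swap) :=
  ⟨fun x => hS.1 x.swap, hS.2.1.preimage Prod.swap_injective.injOn, hS.2.2.2, hS.2.2.1⟩

lemma row_finite (hS : MemCouplingN P Q S) (i : ℕ) : (support fun j => S (i, j)).Finite :=
  hS.2.1.preimage (Prod.mk_right_injective i).injOn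

lemma finite_support_mul (hS : MemCouplingN P Q S) (g : ℕ × ℕ → ℝ) :
    (support fun x => S x * g x).Finite :=
  hS.2.1.subset (support_mul_subset_left _ _)

lemma le_fst (hS : MemCouplingN P Q S) (x : ℕ × ℕ) : S x ≤ P x.1 :=
  hS.2.2.1 x.1 ▸ single_le_finsum x.2 (hS.row_finite x.1) fun _ => hS.1 _

lemma le_snd (hS : MemCouplingN P Q S) (x : ℕ × ℕ) : S x ≤ Q x.2 :=
  hS.swap.le_fst x.swap

lemma fst_pos (hS : MemCouplingN P Q S) {x : ℕ × ℕ} (hx : S x ≠ 0) : 0 < P x.1 :=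
  (lt_of_le_of_ne (hS.1 x) (Ne.symm hx)).trans_le (hS.le_fst x)

lemma snd_pos (hS : MemCouplingN P Q S) {x : ℕ × ℕ} (hx : S x ≠ 0) : 0 < Q x.2 :=
  hS.swap.fst_pos (x := x.swap) hx

lemma finsum_mul_fst (hS : MemCouplingN P Q S) (g : ℕ → ℝ) :
    ∑ᶠ x, S x * g x.1 = ∑ᶠ i, P i * g i := by
  rw [finsum_curry _ (hS.finite_support_mul _)]
  exact finsum_congr fun i => by simp only [← finsum_mul, hS.2.2.1 i]

lemma finsum_mul_snd (hS : MemCouplingN P Q S) (g : ℕ → ℝ) :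
    ∑ᶠ x, S x * g x.2 = ∑ᶠ j, Q j * g j := by
  rw [← hS.swap.finsum_mul_fst g]
  exact (finsum_comp_equiv (Equiv.prodComm ℕ ℕ)).symm

lemma mutInfoN_eq (hS : MemCouplingN P Q S) :
    mutInfoN P Q S = entN P + entN Q - entN2 S := by
  have hterm : ∀ x, S x * log (S x / (P x.1 * Q x.2)) =
      S x * log (S x) - S x * log (P x.1) - S x * log (Q x.2) := by
    intro x
    rcases eq_or_ne (S x) 0 with hx | hx
    · simp [hx]
    · have hPx := hS.fst_pos hx
      have hQx := hS.snd_pos hx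
      rw [log_div hx (by positivity), log_mul hPx.ne' hQx.ne']
      ring
  have hfin := hS.finite_support_mul
  rw [mutInfoN, finsum_congr hterm, finsum_sub_distrib, finsum_sub_distrib (hfin _) (hfin _),
    hS.finsum_mul_fst fun i => log (P i), hS.finsum_mul_snd fun j => log (Q j), entN, entN, entN2]
  · ring
  · exact ((hfin _).union (hfin _)).subset (support_sub _ _)
  · exact hfin _

lemma vi_eq (hS : MemCouplingN P Q S) : vi P Q S = 2 * entN2 S - entN P - entN Q := by
  rw [vi, hS.mutInfoN_eq]
  ring

lemma entN2_sub_entN (hS : MemCouplingN P Q S) :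
    entN2 S - entN P = ∑ᶠ x, S x * log (P x.1 / S x) := by
  have hterm : ∀ x, S x * log (P x.1 / S x) = S x * log (P x.1) - S x * log (S x) := by
    intro x
    rcases eq_or_ne (S x) 0 with hx | hx
    · simp [hx]
    · rw [log_div (hS.fst_pos hx).ne' hx]
      ring
  rw [finsum_congr hterm, finsum_sub_distrib (hS.finite_support_mul _) (hS.finite_support_mul _),
    hS.finsum_mul_fst fun i => log (P i), entN, entN2]
  ring

lemma mul_log_div_nonneg (hS : MemCouplingN P Q S) (x : ℕ × ℕ) :
    0 ≤ S x * log (P x.1 / S x) := by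
  rcases eq_or_ne (S x) 0 with hx | hx
  · simp [hx]
  · have hSx : 0 < S x := lt_of_le_of_ne (hS.1 x) (Ne.symm hx)
    exact mul_nonneg hSx.le (log_nonneg ((one_le_div hSx).2 (hS.le_fst x)))

lemma entN_le_entN2 (hS : MemCouplingN P Q S) : entN P ≤ entN2 S :=
  sub_nonneg.1 (hS.entN2_sub_entN ▸ finsum_nonneg hS.mul_log_div_nonneg)

lemma forall_eq_fst_iff (hS : MemCouplingN P Q S) :
    (∀ x, S x ≠ 0 → S x = P x.1) ↔
      ∀ i, ∀ j j' : ℕ, S (i, j) ≠ 0 → S (i, j') ≠ 0 → j = j' := by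
  constructor
  · intro h i j j' hj hj'
    by_contra hne
    let R := (hS.row_finite i).toFinset
    have hsub : ({j, j'} : Finset ℕ) ⊆ R := Finset.insert_subset_iff.2
      ⟨(hS.row_finite i).mem_toFinset.2 hj,
        Finset.singleton_subset_iff.2 ((hS.row_finite i).mem_toFinset.2 hj')⟩
    have hle := Finset.sum_le_sum_of_subset_of_nonneg hsub fun k _ _ => hS.1 (i, k)
    rw [Finset.sum_pair hne, ← finsum_eq_sum _ (hS.row_finite i), hS.2.2.1 i,
      h _ hj, h _ hj'] at hle
    linarith [hS.fst_pos hj]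
  · intro h x hx
    rw [← hS.2.2.1 x.1, finsum_eq_single _ x.2 fun j hj => by_contra fun h' => hj (h _ _ _ h' hx)]

lemma entN2_eq_entN_iff (hS : MemCouplingN P Q S) :
    entN2 S = entN P ↔ ∀ i, ∀ j j' : ℕ, S (i, j) ≠ 0 → S (i, j') ≠ 0 → j = j' := by
  rw [← hS.forall_eq_fst_iff, ← sub_eq_zero, hS.entN2_sub_entN]
  have hfin := hS.finite_support_mul fun x => log (P x.1 / S x)
  constructor
  · intro hz x hx
    have hSx : 0 < S x := lt_of_le_of_ne (hS.1 x) (Ne.symm hx)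
    refine ((mul_log_div_eq_zero_iff hSx (hS.fst_pos hx)).1 ?_).symm
    exact le_antisymm (hz ▸ single_le_finsum x hfin hS.mul_log_div_nonneg) (hS.mul_log_div_nonneg x)
  · intro h
    refine finsum_eq_zero_of_forall_eq_zero fun x => ?_
    rcases eq_or_ne (S x) 0 with hx | hx
    · simp [hx]
    · rw [← h x hx, div_self hx, log_one, mul_zero]

lemma support_subset (hS : MemCouplingN P Q S) {F G : Finset ℕ} (hF : support P ⊆ F)
    (hG : support Q ⊆ G) : support S ⊆ ↑(F ×ˢ G) := fun x hx => by
  simpa using ⟨hF (hS.fst_pos hx).ne', hG (hS.snd_pos hx).ne'⟩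

lemma entN2_eq_sum (hS : MemCouplingN P Q S) {F G : Finset ℕ} (hF : support P ⊆ F)
    (hG : support Q ⊆ G) : entN2 S = ∑ x ∈ F ×ˢ G, negMulLog (S x) := by
  rw [entN2, finsum_eq_sum_of_support_subset _
    ((support_mul_subset_left _ _).trans (hS.support_subset hF hG)), ← Finset.sum_neg_distrib]
  simp only [negMulLog, neg_mul]

end MemCouplingN

lemma memCouplingN_iff {F G : Finset ℕ} (hF : support P ⊆ F) (hG : support Q ⊆ G) :
    MemCouplingN P Q S ↔ (∀ x, 0 ≤ S x) ∧ (∀ x ∉ F ×ˢ G, S x = 0) ∧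
      (∀ i, ∑ j ∈ G, S (i, j) = P i) ∧ (∀ j, ∑ i ∈ F, S (i, j) = Q j) := by
  constructor
  · intro hS
    refine ⟨hS.1, fun x hx => by_contra fun h => hx (hS.support_subset hF hG h), fun i => ?_,
      fun j => ?_⟩
    · rw [← hS.2.2.1 i]
      exact (finsum_eq_sum_of_support_subset _ fun j hj => hG (hS.snd_pos (x := (i, j)) hj).ne').symm
    · rw [← hS.2.2.2 j]
      exact (finsum_eq_sum_of_support_subset _ fun i hi => hF (hS.fst_pos (x := (i, j)) hi).ne').symm
  · rintro ⟨hnn, hzero, hrow, hcol⟩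
    have hsupp : support S ⊆ ↑(F ×ˢ G) := fun x hx => by_contra fun h => hx (hzero x h)
    refine ⟨hnn, (F ×ˢ G).finite_toSet.subset hsupp, fun i => ?_, fun j => ?_⟩
    · rw [finsum_eq_sum_of_support_subset (fun j => S (i, j))
        fun j hj => (Finset.mem_product.1 (hsupp hj)).2, hrow]
    · rw [finsum_eq_sum_of_support_subset (fun i => S (i, j))
        fun i hi => (Finset.mem_product.1 (hsupp hi)).1, hcol]

lemma isCompact_setOf_memCouplingN (hP : IsFinProb P) (hQ : IsFinProb Q) :
    IsCompact {S | MemCouplingN P Q S} := by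
  have hF : support P ⊆ hP.2.1.toFinset := by simp
  have hG : support Q ⊆ hQ.2.1.toFinset := by simp
  refine (isCompact_univ_pi fun _ => isCompact_Icc (a := (0 : ℝ)) (b := 1)).of_isClosed_subset ?_
    fun S hS x _ => ⟨hS.1 x, (hS.le_fst x).trans (hP.le_one _)⟩
  simp only [memCouplingN_iff hF hG, Set.ofPred_and, Set.ofPred_forall]
  refine (isClosed_iInter fun x => isClosed_le continuous_const (continuous_apply x)).inter
    ((isClosed_iInter fun x => isClosed_iInter fun _ =>
      isClosed_eq (continuous_apply x) continuous_const).inter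
      ((isClosed_iInter fun _ => isClosed_eq (by fun_prop) continuous_const).inter
        (isClosed_iInter fun _ => isClosed_eq (by fun_prop) continuous_const)))

lemma exists_isMinOn_entN2 (hP : IsFinProb P) (hQ : IsFinProb Q) :
    ∃ S ∈ {S | MemCouplingN P Q S}, IsMinOn entN2 {S | MemCouplingN P Q S} S := by
  have hF : support P ⊆ hP.2.1.toFinset := by simp
  have hG : support Q ⊆ hQ.2.1.toFinset := by simp
  refine (isCompact_setOf_memCouplingN hP hQ).exists_isMinOn ⟨_, hP.memCouplingN_mul hQ⟩ ?_
  exact (continuous_finsetSum _ fun x _ => continuous_negMulLog.comp (continuous_apply x)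
    ).continuousOn.congr fun S hS => hS.entN2_eq_sum hF hG

lemma viDist_eq_vi_of_isMinOn (hS : MemCouplingN P Q S)
    (hmin : IsMinOn entN2 {S | MemCouplingN P Q S} S) : viDist P Q = vi P Q S := by
  refine IsLeast.csInf_eq ⟨⟨S, hS, rfl⟩, ?_⟩
  rintro _ ⟨S', hS', rfl⟩
  rw [hS.vi_eq, hS'.vi_eq]
  linarith [isMinOn_iff.1 hmin S' hS']

end

/-- `Δ̲(P,Q) = H(P) − H(Q)` iff there is a coupling in which the second
coordinate is a deterministic function of the first (at most one nonzero entry per row). -/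
theorem viDist_eq_entropy_diff_iff (P Q : ℕ → ℝ) (hP : IsFinProb P) (hQ : IsFinProb Q) :
    viDist P Q = entN P - entN Q ↔
    ∃ S : ℕ × ℕ → ℝ, MemCouplingN P Q S ∧
      ∀ i, ∀ j j' : ℕ, S (i, j) ≠ 0 → S (i, j') ≠ 0 → j = j' := by
  constructor
  · intro h
    obtain ⟨S, hS, hmin⟩ := exists_isMinOn_entN2 hP hQ
    have hvi := viDist_eq_vi_of_isMinOn hS hmin
    rw [h, hS.vi_eq] at hvi
    exact ⟨S, hS, hS.entN2_eq_entN_iff.1 (by linarith)⟩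
  · rintro ⟨S, hS, hdet⟩
    have hSP := hS.entN2_eq_entN_iff.2 hdet
    have hmin : IsMinOn entN2 {S | MemCouplingN P Q S} S :=
      isMinOn_iff.2 fun S' hS' => hSP.le.trans hS'.entN_le_entN2
    rw [viDist_eq_vi_of_isMinOn hS hmin, hS.vi_eq, hSP]
    ring
end

section
/- Let r ∈ ℤ^n and c ∈ ℤ^m be vectors of nonnegative integers with ∑_i r_i = ∑_j c_j, and let T(r,c) be the set of n×m matrices with nonnegative real entries whose i-th row sums to r_i for every i and whose j-th column sums to c_j for every j. Then every extreme point of the convex set T(r,c) has all entries in ℤ. -/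
/-!
Let `E` be the set of non-integral entries of an extreme point `A`. Because all line sums are
integers, every row or column meeting `E` meets it at least twice, so `#R + #C ≤ #E` for the sets
`R`, `C` of rows and columns meeting `E`. Matrices supported on `E` form a space of dimension `#E`,
and their line sums on `R` and `C` span at most `#R + #C - 1` dimensions (the row sums and the
column sums both add up to the total sum), so some nonzero `y` supported on `E` has vanishing line
sums. The entries of `A` on `E` are positive, so `A ± t • y` stay in the polytope for small `t`,
contradicting extremality.
-/

open Finset Filter Topology

theorem exists_ne_notMem_of_sum_mem {α M S : Type*} [Fintype α] [DecidableEq α]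
    [AddCommGroup M] [SetLike S M] [AddSubgroupClass S M] {s : S} {f : α → M}
    (hsum : ∑ a, f a ∈ s) {a : α} (ha : f a ∉ s) : ∃ b ≠ a, f b ∉ s := by
  by_contra! h
  have hrest : ∑ b ∈ univ.erase a, f b ∈ s := sum_mem fun b hb => h b (ne_of_mem_erase hb)
  rw [← add_sum_erase _ _ (mem_univ a)] at hsum
  exact ha (by simpa using sub_mem hsum hrest)

theorem Finset.two_mul_card_image_le {α β : Type*} [DecidableEq β] {s : Finset α} {f : α → β}
    (h : ∀ a ∈ s, ∃ b ∈ s, b ≠ a ∧ f b = f a) : 2 * #(s.image f) ≤ #s := by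
  rw [card_eq_sum_card_image f s, mul_comm, ← smul_eq_mul, ← sum_const]
  refine sum_le_sum fun x hx => ?_
  obtain ⟨a, ha, rfl⟩ := mem_image.1 hx
  obtain ⟨b, hb, hba, hfb⟩ := h a ha
  exact one_lt_card.2 ⟨a, by simp [ha], b, by simp [hb, hfb], hba.symm⟩

theorem LinearMap.ker_ne_bot_of_range_ne_top {K V W : Type*} [DivisionRing K]
    [AddCommGroup V] [Module K V] [AddCommGroup W] [Module K W]
    [FiniteDimensional K V] [FiniteDimensional K W] {f : V →ₗ[K] W}
    (hf : range f ≠ ⊤) (hdim : Module.finrank K W ≤ Module.finrank K V) : ker f ≠ ⊥ := by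
  rw [← ker_rangeRestrict]
  exact ker_ne_bot_of_finrank_lt ((Submodule.finrank_lt hf).trans_le hdim)

section LineSums

variable (R : Type*) {ι κ : Type*} [Fintype ι] [Fintype κ] [Semiring R]

@[simps]
def lineSums : (ι → κ → R) →ₗ[R] (ι → R) × (κ → R) where
  toFun y := (fun i => ∑ j, y i j, fun j => ∑ i, y i j)
  map_add' y z := by ext <;> simp [sum_add_distrib]
  map_smul' a y := by ext <;> simp [mul_sum]

variable {R}

theorem lineSums_eq_zero_iff {y : ι → κ → R} :
    lineSums R y = 0 ↔ (∀ i, ∑ j, y i j = 0) ∧ ∀ j, ∑ i, y i j = 0 := by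
  simp only [Prod.ext_iff, lineSums_apply, funext_iff, Prod.fst_zero, Prod.snd_zero,
    Pi.zero_apply]

end LineSums

section Support

variable {ι κ M : Type*} [AddCommMonoid M] {E : Finset (ι × κ)} {y : ι → κ → M}

theorem sum_row_eq_zero_of_notMem [Fintype κ] [DecidableEq ι]
    (hy : ∀ i j, y i j ≠ 0 → (i, j) ∈ E) {i : ι} (hi : i ∉ E.image Prod.fst) :
    ∑ j, y i j = 0 :=
  sum_eq_zero fun j _ => by_contra fun h => hi (mem_image_of_mem Prod.fst (hy i j h))

theorem sum_col_eq_zero_of_notMem [Fintype ι] [DecidableEq κ]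
    (hy : ∀ i j, y i j ≠ 0 → (i, j) ∈ E) {j : κ} (hj : j ∉ E.image Prod.snd) :
    ∑ i, y i j = 0 :=
  sum_eq_zero fun i _ => by_contra fun h => hj (mem_image_of_mem Prod.snd (hy i j h))

end Support

section Kernel

variable {K ι κ : Type*} [Field K] {E : Finset (ι × κ)}

noncomputable def extendByZero (E : Finset (ι × κ)) : (E → K) →ₗ[K] ι → κ → K :=
  (LinearEquiv.curry K K ι κ).toLinearMap ∘ₗ Function.ExtendByZero.linearMap K (↑)

theorem extendByZero_apply (x : E → K) (e : E) : extendByZero E x e.1.1 e.1.2 = x e :=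
  Subtype.val_injective.extend_apply _ _ e

theorem mem_of_extendByZero_ne_zero {x : E → K} {i : ι} {j : κ}
    (h : extendByZero E x i j ≠ 0) : (i, j) ∈ E := by
  by_contra hij
  exact h (Function.extend_apply' _ _ _ fun ⟨e, he⟩ => hij (he ▸ e.2))

variable [Fintype ι] [Fintype κ] [DecidableEq ι] [DecidableEq κ]

theorem exists_ne_zero_lineSums_eq_zero_of_card_le (hE : E.Nonempty)
    (hcard : #(E.image Prod.fst) + #(E.image Prod.snd) ≤ #E) :
    ∃ y : ι → κ → K, y ≠ 0 ∧ lineSums K y = 0 ∧ ∀ i j, y i j ≠ 0 → (i, j) ∈ E := by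
  set R := E.image Prod.fst
  set C := E.image Prod.snd
  have hsupp (x : E → K) i j := mem_of_extendByZero_ne_zero (x := x) (i := i) (j := j)
  let φ : (E → K) →ₗ[K] (R → K) × (C → K) :=
    ((LinearMap.funLeft K K ((↑) : R → ι)).prodMap (LinearMap.funLeft K K ((↑) : C → κ))) ∘ₗ
      lineSums K ∘ₗ extendByZero E
  -- both sides are the sum of all entries of `extendByZero E x`
  have hφ (x : E → K) : ∑ i, (φ x).1 i = ∑ j, (φ x).2 j := by
    simp only [φ, LinearMap.coe_comp, Function.comp_apply, LinearMap.prodMap_apply,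
      LinearMap.funLeft_apply, lineSums_apply]
    rw [sum_coe_sort R fun i => ∑ j, extendByZero E x i j,
      sum_coe_sort C fun j => ∑ i, extendByZero E x i j,
      sum_subset (subset_univ R) fun i _ hi => sum_row_eq_zero_of_notMem (hsupp x) hi,
      sum_subset (subset_univ C) fun j _ hj => sum_col_eq_zero_of_notMem (hsupp x) hj, sum_comm]
  have hrange : LinearMap.range φ ≠ ⊤ := by
    obtain ⟨i₀, hi₀⟩ := hE.image Prod.fst
    intro h
    obtain ⟨x, hx⟩ := LinearMap.range_eq_top.1 h (Pi.single ⟨i₀, hi₀⟩ 1, 0)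
    simpa [hx] using hφ x
  have hdim : Module.finrank K ((R → K) × (C → K)) ≤ Module.finrank K (E → K) := by
    simpa using hcard
  obtain ⟨x, hx, hx0⟩ :=
    (Submodule.ne_bot_iff _).1 (LinearMap.ker_ne_bot_of_range_ne_top hrange hdim)
  refine ⟨extendByZero E x, fun h => hx0 ?_, lineSums_eq_zero_iff.2 ⟨fun i => ?_, fun j => ?_⟩,
    hsupp x⟩
  · ext e
    simpa [h] using (extendByZero_apply x e).symm
  · by_cases hi : i ∈ R
    · simpa [φ] using congr_fun (congr_arg Prod.fst hx) ⟨i, hi⟩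
    · exact sum_row_eq_zero_of_notMem (hsupp x) hi
  · by_cases hj : j ∈ C
    · simpa [φ] using congr_fun (congr_arg Prod.snd hx) ⟨j, hj⟩
    · exact sum_col_eq_zero_of_notMem (hsupp x) hj

theorem exists_ne_zero_lineSums_eq_zero (hE : E.Nonempty)
    (hrow : ∀ p ∈ E, ∃ q ∈ E, q ≠ p ∧ q.1 = p.1) (hcol : ∀ p ∈ E, ∃ q ∈ E, q ≠ p ∧ q.2 = p.2) :
    ∃ y : ι → κ → K, y ≠ 0 ∧ lineSums K y = 0 ∧ ∀ i j, y i j ≠ 0 → (i, j) ∈ E := by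
  have := two_mul_card_image_le hrow
  have := two_mul_card_image_le hcol
  exact exists_ne_zero_lineSums_eq_zero_of_card_le hE (by omega)

end Kernel

theorem eventually_nonneg_add_smul {ι κ : Type*} [Finite ι] [Finite κ] {A y : ι → κ → ℝ}
    (hA : 0 ≤ A) (hy : ∀ i j, y i j ≠ 0 → 0 < A i j) :
    ∀ᶠ t in 𝓝 (0 : ℝ), 0 ≤ A + t • y := by
  simp only [Pi.le_def, Pi.zero_apply, Pi.add_apply, Pi.smul_apply, smul_eq_mul, eventually_all]
  intro i j
  rcases eq_or_ne (y i j) 0 with h | h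
  · exact .of_forall fun _ => by simpa [h] using hA i j
  · have : Tendsto (fun t => A i j + t * y i j) (𝓝 0) (𝓝 (A i j)) := by
      simpa using ((tendsto_id (x := 𝓝 (0 : ℝ))).mul_const (y i j)).const_add (A i j)
    exact (this.eventually_const_lt (hy i j h)).mono fun _ => le_of_lt

section Transportation

variable {ι κ : Type*} [Fintype ι] [Fintype κ]

def transportationPolytope (r : ι → ℝ) (c : κ → ℝ) : Set (ι → κ → ℝ) :=
  {S | (∀ i j, 0 ≤ S i j) ∧ (∀ i, ∑ j, S i j = r i) ∧ (∀ j, ∑ i, S i j = c j)}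

variable {r : ι → ℝ} {c : κ → ℝ} {A y : ι → κ → ℝ}

theorem add_mem_transportationPolytope (hA : A ∈ transportationPolytope r c)
    (hy : lineSums ℝ y = 0) (hAy : 0 ≤ A + y) : A + y ∈ transportationPolytope r c := by
  obtain ⟨-, hrow, hcol⟩ := hA
  obtain ⟨hyrow, hycol⟩ := lineSums_eq_zero_iff.1 hy
  refine ⟨fun i j => hAy i j, fun i => ?_, fun j => ?_⟩
  · simp [sum_add_distrib, hrow, hyrow]
  · simp [sum_add_distrib, hcol, hycol]

theorem eq_zero_of_mem_extremePoints_transportationPolytope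
    (hA : A ∈ (transportationPolytope r c).extremePoints ℝ) (hy : lineSums ℝ y = 0)
    (hpos : ∀ i j, y i j ≠ 0 → 0 < A i j) : y = 0 := by
  have h := eventually_nonneg_add_smul (fun i j => hA.1.1 i j) hpos
  have h' := (continuous_neg.tendsto' (0 : ℝ) 0 neg_zero).eventually h
  obtain ⟨t, ⟨hadd, hsub⟩, ht⟩ :=
    ((h.and h').filter_mono nhdsWithin_le_nhds |>.and self_mem_nhdsWithin).exists
      (f := 𝓝[≠] (0 : ℝ))
  have hsmul (s : ℝ) : lineSums ℝ (s • y) = 0 := by rw [map_smul, hy, smul_zero]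
  have hmem_add := add_mem_transportationPolytope hA.1 (hsmul t) hadd
  have hmem_sub : A - t • y ∈ transportationPolytope r c := by
    rw [sub_eq_add_neg, ← neg_smul]
    exact add_mem_transportationPolytope hA.1 (hsmul (-t)) hsub
  have := hA.2 hmem_add hmem_sub (mem_openSegment_add_sub A (t • y))
  exact (smul_eq_zero.1 (by simpa using this)).resolve_left ht

end Transportation

theorem extreme_points_of_integer_transportation_polytope_are_integral_general
    {n m : ℕ} (r : Fin n → ℤ) (c : Fin m → ℤ)
    (A : Fin n → Fin m → ℝ)
    (hA : A ∈ Set.extremePoints ℝ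
      {S : Fin n → Fin m → ℝ |
        (∀ i j, 0 ≤ S i j) ∧
        (∀ i, ∑ j, S i j = (r i : ℝ)) ∧
        (∀ j, ∑ i, S i j = (c j : ℝ))}) :
    ∀ i j, ∃ z : ℤ, A i j = (z : ℝ) := by
  classical
  change A ∈ (transportationPolytope (fun i => (r i : ℝ)) (fun j => (c j : ℝ))).extremePoints ℝ
    at hA
  obtain ⟨hA0, hrow, hcol⟩ := hA.1
  set E : Finset (Fin n × Fin m) := {p | A p.1 p.2 ∉ (⊥ : Subring ℝ)}
  suffices hE : ¬E.Nonempty by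
    intro i j
    by_contra hij
    exact hE ⟨(i, j), by simpa [E, Subring.mem_bot, eq_comm] using hij⟩
  intro hE
  have hrowE : ∀ p ∈ E, ∃ q ∈ E, q ≠ p ∧ q.1 = p.1 := by
    intro p hp
    obtain ⟨j, hj, hjA⟩ :=
      exists_ne_notMem_of_sum_mem (s := (⊥ : Subring ℝ)) (f := A p.1)
        (by rw [hrow]; exact intCast_mem _ _) (by simpa [E] using hp)
    exact ⟨(p.1, j), by simpa [E] using hjA, fun h => hj (congr_arg Prod.snd h), rfl⟩
  have hcolE : ∀ p ∈ E, ∃ q ∈ E, q ≠ p ∧ q.2 = p.2 := by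
    intro p hp
    obtain ⟨i, hi, hiA⟩ :=
      exists_ne_notMem_of_sum_mem (s := (⊥ : Subring ℝ)) (f := fun i => A i p.2)
        (by rw [hcol]; exact intCast_mem _ _) (by simpa [E] using hp)
    exact ⟨(i, p.2), by simpa [E] using hiA, fun h => hi (congr_arg Prod.fst h), rfl⟩
  obtain ⟨y, hy0, hy, hyE⟩ := exists_ne_zero_lineSums_eq_zero (K := ℝ) hE hrowE hcolE
  refine hy0 (eq_zero_of_mem_extremePoints_transportationPolytope hA hy
    fun i j hij => (hA0 i j).lt_of_ne' fun h0 => ?_)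
  simpa [E, h0] using hyE i j hij

/-- every extreme point of the transportation polytope of nonnegative
real `n × m` matrices with prescribed nonnegative integer row sums `r` and column
sums `c` (with `∑ r = ∑ c`) has all entries integral. -/
theorem extreme_points_of_integer_transportation_polytope_are_integral
    {n m : ℕ} (r : Fin n → ℤ) (c : Fin m → ℤ)
    (hr : ∀ i, 0 ≤ r i) (hc : ∀ j, 0 ≤ c j)
    (hrc : ∑ i, r i = ∑ j, c j)
    (A : Fin n → Fin m → ℝ)
    (hA : A ∈ Set.extremePoints ℝ
      {S : Fin n → Fin m → ℝ |
        (∀ i j, 0 ≤ S i j) ∧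
        (∀ i, ∑ j, S i j = (r i : ℝ)) ∧
        (∀ j, ∑ i, S i j = (c j : ℝ))}) :
    ∀ i j, ∃ z : ℤ, A i j = (z : ℝ) :=
  extreme_points_of_integer_transportation_polytope_are_integral_general r c A hA
end
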